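/- The 4-form ψ₀ is a calibration on (ℝ⁷, g₀): for any orthonormal quadruple u, v, w, x ∈ ℝ⁷ one has |ψ₀(u, v, w, x)| ≤ 1; moreover, for an orthonormal quadruple u, v, w, x, ψ₀(u, v, w, x) = 1 if and only if u = ½χ₀(v, w, x). -/

import Mathlib

open scoped RealInnerProductSpace

noncomputable section

abbrev E7 : Type := EuclideanSpace ℝ (Fin 7)

/-- `dxⁱ ∧ dxʲ ∧ dxᵏ` evaluated on the triple `(u, v, w)`. -/
def triDet (u v w : E7) (i j k : Fin 7) : ℝ :=
  Matrix.det !![u i, u j, u k; v i, v j, v k; w i, w j, w k]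

/-- The standard G₂ 3-form `φ₀ = dx¹²³ + dx¹⁴⁵ + dx¹⁶⁷ + dx²⁴⁶ − dx²⁵⁷ − dx³⁴⁷ − dx³⁵⁶`
(here with 0-indexed coordinates). -/
def phi0 (u v w : E7) : ℝ :=
  triDet u v w 0 1 2 + triDet u v w 0 3 4 + triDet u v w 0 5 6 +
    triDet u v w 1 3 5 - triDet u v w 1 4 6 - triDet u v w 2 3 6 - triDet u v w 2 4 5

/-- `dxⁱ ∧ dxʲ ∧ dxᵏ ∧ dxˡ` evaluated on the quadruple `(u, v, w, x)`. -/
def quadDet (u v w x : E7) (i j k l : Fin 7) : ℝ :=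
  Matrix.det !![u i, u j, u k, u l; v i, v j, v k, v l;
                w i, w j, w k, w l; x i, x j, x k, x l]

/-- The 4-form `ψ₀ = −dx¹²⁴⁷ − dx¹²⁵⁶ − dx¹³⁴⁶ + dx¹³⁵⁷ + dx²³⁴⁵ + dx²³⁶⁷ + dx⁴⁵⁶⁷`
(here with 0-indexed coordinates). -/
def psi0 (u v w x : E7) : ℝ :=
  -quadDet u v w x 0 1 3 6 - quadDet u v w x 0 1 4 5 - quadDet u v w x 0 2 3 5 +
    quadDet u v w x 0 2 4 6 + quadDet u v w x 1 2 3 4 + quadDet u v w x 1 2 5 6 +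
    quadDet u v w x 3 4 5 6

/-!
Let `m = ½χ₀(v, w, x)`, so that `ψ₀(u, v, w, x) = ⟪u, m⟫`. Expanding coordinates gives the
G₂ identity `‖m‖² + φ₀(v, w, x)² = det Gram(v, w, x)`, whose right side is `1` for orthonormal
`v, w, x`; hence `‖m‖ ≤ 1`. For a unit vector `u`, Cauchy–Schwarz then bounds `|⟪u, m⟫|` by `1`,
with equality `⟪u, m⟫ = 1` exactly when `u = m`.
-/

lemma triDet_eq (u v w : E7) (i j k : Fin 7) :
    triDet u v w i j k =
      u i * (v j * w k - v k * w j) - u j * (v i * w k - v k * w i) +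
        u k * (v i * w j - v j * w i) := by
  simp only [triDet, Matrix.det_fin_three, Matrix.of_apply, Matrix.cons_val]
  ring

lemma quadDet_eq (u v w x : E7) (i j k l : Fin 7) :
    quadDet u v w x i j k l =
      u i * triDet v w x j k l - u j * triDet v w x i k l +
        u k * triDet v w x i j l - u l * triDet v w x i j k := by
  simp [quadDet, triDet, Matrix.det_succ_row_zero, Fin.sum_univ_succ, Fin.succAbove]
  ring

lemma inner_E7_eq_sum (a b : E7) :
    ⟪a, b⟫ = a 0 * b 0 + a 1 * b 1 + a 2 * b 2 + a 3 * b 3 + a 4 * b 4 + a 5 * b 5 + a 6 * b 6 := by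
  simp only [PiLp.inner_apply, RCLike.inner_apply, conj_trivial, Fin.sum_univ_seven]
  ring

/-- `½χ₀(v, w, x)`; its coordinates come from expanding each `quadDet` in `psi0` along its
first row. -/
def halfChi0 (v w x : E7) : E7 :=
  let t := triDet v w x
  !₂[-t 1 3 6 - t 1 4 5 - t 2 3 5 + t 2 4 6,
     t 0 3 6 + t 0 4 5 + t 2 3 4 + t 2 5 6,
     t 0 3 5 - t 0 4 6 - t 1 3 4 - t 1 5 6,
     -t 0 1 6 - t 0 2 5 + t 1 2 4 + t 4 5 6,
     -t 0 1 5 + t 0 2 6 - t 1 2 3 - t 3 5 6,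
     t 0 1 4 + t 0 2 3 + t 1 2 6 + t 3 4 6,
     t 0 1 3 - t 0 2 4 - t 1 2 5 - t 3 4 5]

lemma psi0_eq_inner_halfChi0 (u v w x : E7) : psi0 u v w x = ⟪u, halfChi0 v w x⟫ := by
  simp only [psi0, quadDet_eq, inner_E7_eq_sum, halfChi0, Matrix.cons_val]
  ring

lemma norm_sq_halfChi0_add_sq_phi0 (v w x : E7) :
    ‖halfChi0 v w x‖ ^ 2 + phi0 v w x ^ 2 = (Matrix.gram ℝ ![v, w, x]).det := by
  rw [← real_inner_self_eq_norm_sq, Matrix.det_fin_three]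
  simp only [Matrix.gram_apply, Matrix.cons_val, inner_E7_eq_sum, halfChi0, phi0, triDet_eq]
  ring

lemma norm_halfChi0_le_one {v w x : E7} (h : Orthonormal ℝ ![v, w, x]) :
    ‖halfChi0 v w x‖ ≤ 1 := by
  have key := norm_sq_halfChi0_add_sq_phi0 v w x
  rw [Matrix.gram_eq_one_iff_orthonormal.2 h, Matrix.det_one] at key
  rw [← sq_le_one_iff₀ (norm_nonneg _)]
  nlinarith [sq_nonneg (phi0 v w x)]

section InnerProductSpace

variable {F : Type*} [NormedAddCommGroup F] [InnerProductSpace ℝ F]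

lemma orthonormal_vecCons_three {v w x : F} (hv : ‖v‖ = 1) (hw : ‖w‖ = 1) (hx : ‖x‖ = 1)
    (hvw : ⟪v, w⟫ = 0) (hvx : ⟪v, x⟫ = 0) (hwx : ⟪w, x⟫ = 0) : Orthonormal ℝ ![v, w, x] := by
  rw [orthonormal_iff_ite]
  intro i j
  fin_cases i <;> fin_cases j <;>
    simp [real_inner_comm, hv, hw, hx, hvw, hvx, hwx]

lemma abs_real_inner_le_one {u m : F} (hu : ‖u‖ ≤ 1) (hm : ‖m‖ ≤ 1) : |⟪u, m⟫| ≤ 1 :=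
  (abs_real_inner_le_norm u m).trans (mul_le_one₀ hu (norm_nonneg m) hm)

lemma real_inner_eq_one_iff_of_norm_le_one {u m : F} (hu : ‖u‖ = 1) (hm : ‖m‖ ≤ 1) :
    ⟪u, m⟫ = 1 ↔ u = m := by
  constructor
  · intro h
    have hm1 : ‖m‖ = 1 := by
      refine le_antisymm hm ?_
      simpa [h, hu] using real_inner_le_norm u m
    exact (inner_eq_one_iff_of_norm_eq_one hu hm1).1 h
  · rintro rfl
    rw [real_inner_self_eq_norm_sq, hu, one_pow]

end InnerProductSpace

theorem statement4_general (chi : E7 → E7 → E7 → E7)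
    (hchi : ∀ a b c d : E7, ⟪a, (1/2 : ℝ) • chi b c d⟫ = psi0 a b c d)
    (u v w x : E7)
    (hu : ‖u‖ = 1) (hv : ‖v‖ = 1) (hw : ‖w‖ = 1) (hx : ‖x‖ = 1)
    (hvw : ⟪v, w⟫ = 0) (hvx : ⟪v, x⟫ = 0) (hwx : ⟪w, x⟫ = 0) :
    |psi0 u v w x| ≤ 1 ∧ (psi0 u v w x = 1 ↔ u = (1/2 : ℝ) • chi v w x) := by
  have hchi_eq : (1/2 : ℝ) • chi v w x = halfChi0 v w x :=
    ext_inner_left ℝ fun a => by rw [hchi, psi0_eq_inner_halfChi0]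
  have hm := norm_halfChi0_le_one (orthonormal_vecCons_three hv hw hx hvw hvx hwx)
  rw [hchi_eq, psi0_eq_inner_halfChi0]
  exact ⟨abs_real_inner_le_one hu.le hm, real_inner_eq_one_iff_of_norm_le_one hu hm⟩

/-- `ψ₀` is a calibration: for any orthonormal quadruple `u, v, w, x`,
`|ψ₀(u,v,w,x)| ≤ 1`; moreover `ψ₀(u,v,w,x) = 1` if and only if `u = ½χ₀(v,w,x)`. -/
theorem statement4 (chi : E7 → E7 → E7 → E7)
    (hchi : ∀ a b c d : E7, ⟪a, (1/2 : ℝ) • chi b c d⟫ = psi0 a b c d)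
    (u v w x : E7)
    (hu : ‖u‖ = 1) (hv : ‖v‖ = 1) (hw : ‖w‖ = 1) (hx : ‖x‖ = 1)
    (huv : ⟪u, v⟫ = 0) (huw : ⟪u, w⟫ = 0) (hux : ⟪u, x⟫ = 0)
    (hvw : ⟪v, w⟫ = 0) (hvx : ⟪v, x⟫ = 0) (hwx : ⟪w, x⟫ = 0) :
    |psi0 u v w x| ≤ 1 ∧ (psi0 u v w x = 1 ↔ u = (1/2 : ℝ) • chi v w x) :=
  statement4_general chi hchi u v w x hu hv hw hx hvw hvx hwx
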